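/- arXiv:1907.09049 — 2 statements merged into one kernel-verified Lean document; each statement's English description precedes it below -/
import Mathlib

section
/- General stochastic competitive ratio bound: for all $\alpha > 1$, $m \geq 1$, $\Lambda > 0$, and $\mathbb{E}[X] > 0$, letting $C(s) = \frac{\mathbb{E}[X]}{s - \Lambda/m} + \frac{\mathbb{E}[X]}{s} s^\alpha$, we have $\frac{\lambda \inf_{s > \Lambda/m} C(s)}{\max\left(\Lambda \alpha (\alpha-1)^{1/\alpha - 1}, \, \Lambda^\alpha/m^{\alpha-1}\right)} \leq \frac{1 + 2^{\alpha - 1}}{\min\left(1, \alpha(\alpha-1)^{1/\alpha-1}\right)}$, where $\Lambda = \lambda \mathbb{E}[X]$. -/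
/-!
Take the speed `s = 1 + Λ/m` in the gated-static cost: then `λ C(s) = Λ + Λ (1 + Λ/m)^(α-1)`, and
`(1 + x)^(α-1) ≤ 2^(α-1) max(1, x^(α-1))` bounds this by `(1 + 2^(α-1)) Λ max(1, (Λ/m)^(α-1))`.
The lower bound, on the other hand, is the maximum of `c Λ` and `Λ (Λ/m)^(α-1)`, where
`c = α (α-1)^(1/α-1)`, so it is at least `min(1, c)` times the same quantity.
-/

open Set

lemma one_add_rpow_le_two_rpow_mul_max {x p : ℝ} (hx : 0 ≤ x) (hp : 0 ≤ p) :
    (1 + x) ^ p ≤ 2 ^ p * max 1 (x ^ p) := by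
  rcases le_total x 1 with h | h
  · calc (1 + x) ^ p ≤ 2 ^ p := Real.rpow_le_rpow (by positivity) (by linarith) hp
      _ = 2 ^ p * 1 := (mul_one _).symm
      _ ≤ 2 ^ p * max 1 (x ^ p) := by gcongr; exact le_max_left _ _
  · calc (1 + x) ^ p ≤ (2 * x) ^ p := Real.rpow_le_rpow (by positivity) (by linarith) hp
      _ = 2 ^ p * x ^ p := Real.mul_rpow zero_le_two hx
      _ ≤ 2 ^ p * max 1 (x ^ p) := by gcongr; exact le_max_right _ _

lemma rpow_div_rpow_sub_one {x y : ℝ} (hx : 0 < x) (hy : 0 ≤ y) (p : ℝ) :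
    x ^ p / y ^ (p - 1) = x * (x / y) ^ (p - 1) := by
  rw [Real.div_rpow hx.le hy, Real.rpow_sub_one hx.ne']
  field_simp

lemma min_one_mul_max_le {a b : ℝ} (c : ℝ) (ha : 0 ≤ a) :
    min 1 c * max a b ≤ max (a * c) b := by
  rcases le_total a b with h | h
  · rw [max_eq_right h]
    calc min 1 c * b ≤ 1 * b := mul_le_mul_of_nonneg_right (min_le_left _ _) (ha.trans h)
      _ = b := one_mul b
      _ ≤ max (a * c) b := le_max_right _ _
  · rw [max_eq_left h]
    calc min 1 c * a ≤ c * a := mul_le_mul_of_nonneg_right (min_le_right _ _) ha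
      _ = a * c := mul_comm c a
      _ ≤ max (a * c) b := le_max_left _ _

lemma div_mul_rpow_eq_mul_rpow_sub_one {s : ℝ} (hs : 0 < s) (E p : ℝ) :
    E / s * s ^ p = E * s ^ (p - 1) := by
  rw [Real.rpow_sub_one hs.ne']
  ring

lemma sInf_image_gatedStaticCost_le {E ρ : ℝ} (α : ℝ) (hE : 0 ≤ E) (hρ : 0 ≤ ρ) :
    sInf ((fun s : ℝ => E / (s - ρ) + E / s * s ^ α) '' Ioi ρ) ≤ E + E * (1 + ρ) ^ (α - 1) := by
  have hbdd : BddBelow ((fun s : ℝ => E / (s - ρ) + E / s * s ^ α) '' Ioi ρ) := by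
    refine ⟨0, ?_⟩
    rintro _ ⟨s, hs : ρ < s, rfl⟩
    have hs0 : 0 < s := hρ.trans_lt hs
    exact add_nonneg (div_nonneg hE (sub_pos.2 hs).le) (by positivity)
  refine csInf_le_of_le hbdd ⟨1 + ρ, by simp, rfl⟩ (le_of_eq ?_)
  simp only [add_sub_cancel_right, div_one,
    div_mul_rpow_eq_mul_rpow_sub_one (by positivity : 0 < 1 + ρ)]

theorem stmt_16_general (m : ℕ) (α lam E : ℝ) (hα : 1 < α)
    (hlam : 0 < lam) (hE : 0 < E) (Λ : ℝ) (hΛ : Λ = lam * E) :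
    lam * sInf ((fun s : ℝ => E / (s - Λ / m) + E / s * s ^ α) '' Set.Ioi (Λ / m)) /
        max (Λ * (α * (α - 1) ^ (1 / α - 1))) (Λ ^ α / (m : ℝ) ^ (α - 1))
      ≤ (1 + 2 ^ (α - 1)) / min 1 (α * (α - 1) ^ (1 / α - 1)) := by
  have hΛ0 : 0 < Λ := hΛ ▸ mul_pos hlam hE
  have hρ : 0 ≤ Λ / m := by positivity
  have hc : 0 < α * (α - 1) ^ (1 / α - 1) :=
    mul_pos (by linarith) (Real.rpow_pos_of_pos (by linarith) _)
  set M := Λ * max 1 ((Λ / m) ^ (α - 1)) with hM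
  have hM0 : 0 < M := mul_pos hΛ0 (lt_max_of_lt_left one_pos)
  have hnum : lam * sInf ((fun s : ℝ => E / (s - Λ / m) + E / s * s ^ α) '' Ioi (Λ / m))
      ≤ (1 + 2 ^ (α - 1)) * M :=
    calc _ ≤ lam * (E + E * (1 + Λ / m) ^ (α - 1)) :=
          mul_le_mul_of_nonneg_left (sInf_image_gatedStaticCost_le α hE.le hρ) hlam.le
      _ = Λ + Λ * (1 + Λ / m) ^ (α - 1) := by rw [hΛ]; ring
      _ ≤ M + Λ * (2 ^ (α - 1) * max 1 ((Λ / m) ^ (α - 1))) := by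
          gcongr
          · exact le_mul_of_one_le_right hΛ0.le (le_max_left _ _)
          · exact one_add_rpow_le_two_rpow_mul_max hρ (by linarith)
      _ = (1 + 2 ^ (α - 1)) * M := by ring
  have hden : min 1 (α * (α - 1) ^ (1 / α - 1)) * M
      ≤ max (Λ * (α * (α - 1) ^ (1 / α - 1))) (Λ ^ α / (m : ℝ) ^ (α - 1)) := by
    rw [hM, mul_max_of_nonneg _ _ hΛ0.le, mul_one, rpow_div_rpow_sub_one hΛ0 m.cast_nonneg]
    exact min_one_mul_max_le _ hΛ0.le
  calc _ ≤ (1 + 2 ^ (α - 1)) * M / (min 1 (α * (α - 1) ^ (1 / α - 1)) * M) :=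
        div_le_div₀ (by positivity) hnum (mul_pos (lt_min one_pos hc) hM0) hden
    _ = _ := mul_div_mul_right _ _ hM0.ne'

/-- General stochastic competitive ratio bound for the random-routing
gated-static policy with `P(s) = s^α`. -/
theorem stmt_16 (m : ℕ) (hm : 1 ≤ m) (α lam E : ℝ) (hα : 1 < α)
    (hlam : 0 < lam) (hE : 0 < E) (Λ : ℝ) (hΛ : Λ = lam * E) :
    lam * sInf ((fun s : ℝ => E / (s - Λ / m) + E / s * s ^ α) '' Set.Ioi (Λ / m)) /
        max (Λ * (α * (α - 1) ^ (1 / α - 1))) (Λ ^ α / (m : ℝ) ^ (α - 1))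
      ≤ (1 + 2 ^ (α - 1)) / min 1 (α * (α - 1) ^ (1 / α - 1)) :=
  stmt_16_general m α lam E hα hlam hE Λ hΛ
end

section
/- Downtick–uptick matching for step functions: let $g : (0,\infty) \to \mathbb{Z}$ be a piecewise-constant, left-continuous function with finitely many jump points, such that $g(0^+) = g(\infty) = n - n_0$ for some integers, with downward jumps of size 1 at points $q(1), \ldots, q(r)$ and upward jumps of size 1 at points $q_o(1), \ldots, q_o(r)$ (each list with multiplicity, $r$ of each). Then there exists a bijection $\pi : \{1,\ldots,r\} \to \{1,\ldots,r\}$ such that for every $i$, $g(q(i)) \geq g(q_o(\pi(i))) + 1$. -/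
/-!
Two ticks of opposite kind at minimal distance from each other have no tick strictly between
them, so the level at the downtick exceeds the level at the uptick. Removing this pair shifts the
level by `[qo j₀ < x] - [q i₀ < x]`, which is zero outside the interval they span; at the
remaining ticks it can only raise the level at downticks and lower it at upticks. Hence a
matching of the remaining ticks, obtained by induction, extends by the removed pair.
-/

open Finset Equiv

namespace TickMatching

section LinearOrder

variable {α : Type*} [LinearOrder α]

/-- The level, relative to the base level, of the left-continuous step function with unit
downticks at the `q i` and unit upticks at the `qo j`. -/
def level {r : ℕ} (q qo : Fin r → α) (x : α) : ℤ :=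
  (#{j | qo j < x} : ℤ) - #{i | q i < x}

theorem level_swap {r : ℕ} (q qo : Fin r → α) (x : α) : level qo q x = -level q qo x := by
  simp only [level]
  ring

theorem level_eq_level_succAbove_add {m : ℕ} (q qo : Fin (m + 1) → α) (i₀ j₀ : Fin (m + 1))
    (x : α) :
    level q qo x = level (q ∘ i₀.succAbove) (qo ∘ j₀.succAbove) x
      + ((if qo j₀ < x then 1 else 0) - (if q i₀ < x then 1 else 0)) := by
  simp only [level, card_filter, Function.comp_apply]
  rw [Fin.sum_univ_succAbove (fun i => if q i < x then 1 else 0) i₀,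
    Fin.sum_univ_succAbove (fun j => if qo j < x then 1 else 0) j₀]
  push_cast
  ring

theorem level_add_one_le_of_uptick_mem_Ico {r : ℕ} {q qo : Fin r → α} {x y : α} {j : Fin r}
    (hj : qo j ∈ Set.Ico x y) (hq : ∀ i, q i ∉ Set.Ico x y) :
    level q qo x + 1 ≤ level q qo y := by
  have hdown : #{i | q i < x} = #{i | q i < y} := by
    congr 1
    refine filter_congr fun i _ => ⟨fun h => h.trans_le (hj.1.trans hj.2.le), fun h => ?_⟩
    by_contra hx
    exact hq i ⟨not_lt.mp hx, h⟩
  have hup : #{j | qo j < x} < #{j | qo j < y} := by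
    refine card_lt_card ⟨fun k hk => ?_, fun hsub => ?_⟩
    · simp only [mem_filter, mem_univ, true_and] at hk ⊢
      exact hk.trans_le (hj.1.trans hj.2.le)
    have := hsub (mem_filter.mpr ⟨mem_univ j, hj.2⟩)
    exact (mem_filter.mp this).2.not_ge hj.1
  simp only [level, hdown]
  omega

def IsRemovablePair {m : ℕ} (q qo : Fin (m + 1) → α) (i₀ j₀ : Fin (m + 1)) : Prop :=
  level q qo (qo j₀) + 1 ≤ level q qo (q i₀) ∧
    (∀ k, level (q ∘ i₀.succAbove) (qo ∘ j₀.succAbove) (q (i₀.succAbove k))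
      ≤ level q qo (q (i₀.succAbove k))) ∧
    ∀ l, level q qo (qo (j₀.succAbove l))
      ≤ level (q ∘ i₀.succAbove) (qo ∘ j₀.succAbove) (qo (j₀.succAbove l))

theorem isRemovablePair_swap {m : ℕ} (q qo : Fin (m + 1) → α) (i₀ j₀ : Fin (m + 1)) :
    IsRemovablePair qo q j₀ i₀ ↔ IsRemovablePair q qo i₀ j₀ := by
  simp only [IsRemovablePair, level_swap q qo, level_swap (q ∘ i₀.succAbove) (qo ∘ j₀.succAbove),
    neg_le_neg_iff]
  constructor <;> rintro ⟨h₀, hq, hqo⟩ <;> exact ⟨by omega, hqo, hq⟩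

theorem isRemovablePair_of_lt {m : ℕ} {q qo : Fin (m + 1) → α} {i₀ j₀ : Fin (m + 1)}
    (hlt : qo j₀ < q i₀) (hq : ∀ k, q k ∉ Set.Ico (qo j₀) (q i₀))
    (hqo : ∀ l, qo l ∉ Set.Ioc (qo j₀) (q i₀)) : IsRemovablePair q qo i₀ j₀ := by
  refine ⟨level_add_one_le_of_uptick_mem_Ico ⟨le_rfl, hlt⟩ hq, fun k => ?_, fun l => ?_⟩
  · rw [level_eq_level_succAbove_add q qo i₀ j₀ (q (i₀.succAbove k))]
    have : q i₀ < q (i₀.succAbove k) → qo j₀ < q (i₀.succAbove k) := hlt.trans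
    split_ifs <;> first | omega | tauto
  · rw [level_eq_level_succAbove_add q qo i₀ j₀ (qo (j₀.succAbove l))]
    have : qo j₀ < qo (j₀.succAbove l) → q i₀ < qo (j₀.succAbove l) := fun h =>
      not_le.mp fun h' => hqo _ ⟨h, h'⟩
    split_ifs <;> first | omega | tauto

theorem exists_perm_of_isRemovablePair {m : ℕ} {q qo : Fin (m + 1) → α} {i₀ j₀ : Fin (m + 1)}
    (h : IsRemovablePair q qo i₀ j₀) (π' : Perm (Fin m))
    (hπ' : ∀ k, level (q ∘ i₀.succAbove) (qo ∘ j₀.succAbove) (qo (j₀.succAbove (π' k))) + 1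
      ≤ level (q ∘ i₀.succAbove) (qo ∘ j₀.succAbove) (q (i₀.succAbove k))) :
    ∃ π : Perm (Fin (m + 1)), ∀ i, level q qo (qo (π i)) + 1 ≤ level q qo (q i) := by
  obtain ⟨h₀, hq, hqo⟩ := h
  refine ⟨(finSuccEquiv' i₀).trans (π'.optionCongr.trans (finSuccEquiv' j₀).symm), fun i => ?_⟩
  rcases Fin.eq_self_or_eq_succAbove i₀ i with rfl | ⟨k, rfl⟩
  · simpa [finSuccEquiv'_at] using h₀
  · simp only [trans_apply, finSuccEquiv'_succAbove, optionCongr_apply, Option.map_some,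
      finSuccEquiv'_symm_some]
    linarith [hq k, hqo (π' k), hπ' k]

end LinearOrder

section OrderedGroup

variable {α : Type*} [AddCommGroup α] [LinearOrder α] [IsOrderedAddMonoid α]

theorem isRemovablePair_of_lt_of_forall_abs_le {m : ℕ} {q qo : Fin (m + 1) → α}
    (hdisj : ∀ i j, q i ≠ qo j) {i₀ j₀ : Fin (m + 1)}
    (hmin : ∀ i j, |q i₀ - qo j₀| ≤ |q i - qo j|) (hlt : qo j₀ < q i₀) :
    IsRemovablePair q qo i₀ j₀ := by
  refine isRemovablePair_of_lt hlt (fun k hk => ?_) (fun l hl => ?_)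
  · rcases hk.1.eq_or_lt with h | h
    · exact hdisj k j₀ h.symm
    · have := hmin k j₀
      rw [abs_of_pos (sub_pos.mpr hlt), abs_of_pos (sub_pos.mpr h)] at this
      exact ((sub_le_sub_iff_right _).mp this).not_gt hk.2
  · rcases hl.2.eq_or_lt with h | h
    · exact hdisj i₀ l h.symm
    · have := hmin i₀ l
      rw [abs_of_pos (sub_pos.mpr hlt), abs_of_pos (sub_pos.mpr h)] at this
      exact ((sub_le_sub_iff_left _).mp this).not_gt hl.1

theorem exists_perm_level_add_one_le {r : ℕ} (q qo : Fin r → α) (hdisj : ∀ i j, q i ≠ qo j) :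
    ∃ π : Perm (Fin r), ∀ i, level q qo (qo (π i)) + 1 ≤ level q qo (q i) := by
  induction r with
  | zero => exact ⟨1, fun i => i.elim0⟩
  | succ m ih =>
    obtain ⟨⟨i₀, j₀⟩, hmin⟩ := Finite.exists_min fun p : Fin (m + 1) × Fin (m + 1) =>
      |q p.1 - qo p.2|
    obtain ⟨π', hπ'⟩ := ih (q ∘ i₀.succAbove) (qo ∘ j₀.succAbove) fun _ _ => hdisj _ _
    refine exists_perm_of_isRemovablePair ?_ π' hπ'
    rcases (hdisj i₀ j₀).lt_or_gt with hlt | hgt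
    · rw [← isRemovablePair_swap]
      refine isRemovablePair_of_lt_of_forall_abs_le (fun j i => (hdisj i j).symm) (fun j i => ?_) hlt
      simpa only [abs_sub_comm] using hmin (i, j)
    · exact isRemovablePair_of_lt_of_forall_abs_le hdisj (fun i j => hmin (i, j)) hgt

end OrderedGroup

end TickMatching

theorem stmt_17_general (n n₀ : ℤ) (r : ℕ) (q qo : Fin r → ℝ)
    (hdisj : ∀ i j, q i ≠ qo j)
    (g : ℝ → ℤ)
    (hg : ∀ x : ℝ, g x = (n - n₀)
        + ((Finset.univ.filter (fun i : Fin r => qo i < x)).card : ℤ)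
        - ((Finset.univ.filter (fun i : Fin r => q i < x)).card : ℤ)) :
    ∃ π : Equiv.Perm (Fin r), ∀ i : Fin r, g (qo (π i)) + 1 ≤ g (q i) := by
  have hg_level : ∀ x, g x = (n - n₀) + TickMatching.level q qo x := fun x => by
    rw [hg, TickMatching.level]
    ring
  obtain ⟨π, hπ⟩ := TickMatching.exists_perm_level_add_one_le q qo hdisj
  exact ⟨π, fun i => by simpa only [hg_level, add_assoc, add_le_add_iff_left] using hπ i⟩

/-- Downtick–uptick matching: let `g` be the left-continuous integer step
function with base level `n - n₀`, unit downward jumps at the (distinct)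
points `q i > 0` and unit upward jumps at the (distinct) points `qo i > 0`.
Then there is a bijection matching each downtick at `q i` to an uptick at
`qo (π i)` with `g (q i) ≥ g (qo (π i)) + 1`. -/
theorem stmt_17 (n n₀ : ℤ) (r : ℕ) (q qo : Fin r → ℝ)
    (hq : ∀ i, 0 < q i) (hqo : ∀ i, 0 < qo i)
    (hqinj : Function.Injective q) (hqoinj : Function.Injective qo)
    (hdisj : ∀ i j, q i ≠ qo j)
    (g : ℝ → ℤ)
    (hg : ∀ x : ℝ, g x = (n - n₀)
        + ((Finset.univ.filter (fun i : Fin r => qo i < x)).card : ℤ)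
        - ((Finset.univ.filter (fun i : Fin r => q i < x)).card : ℤ)) :
    ∃ π : Equiv.Perm (Fin r), ∀ i : Fin r, g (qo (π i)) + 1 ≤ g (q i) :=
  stmt_17_general n n₀ r q qo hdisj g hg
end
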